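/- For any fixed $\varepsilon \geq 0$, the function $h : \mathbb{R}_{> 0} \to \mathbb{R}$ defined by $h(\eta) = \Pr[\mathcal{N}(\eta, 2\eta) \geq \varepsilon] - e^{\varepsilon}\Pr[\mathcal{N}(\eta, 2\eta) \leq -\varepsilon]$ is monotonically increasing in $\eta$. -/

import Mathlib

/-!
Standardizing, `h(η) = Φ(a) - e^ε Φ(b)` with `a = (η - ε)/√(2η)` and `b = a - √(2η)`.
Since `b² - a² = 2ε`, the Gaussian density satisfies `e^ε φ(b) = φ(a)`, so the two terms of
`h'(η) = φ(a) a' - e^ε φ(b) b'` combine to `φ(a) (a' - b') = φ(a) / √(2η) ≥ 0`.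
-/

open MeasureTheory ProbabilityTheory Set
open scoped NNReal

local notation "Φ" => cdf (gaussianReal 0 1)
local notation "φ" => gaussianPDFReal 0 1

lemma cdf_gaussianReal_eq_integral (μ : ℝ) {v : ℝ≥0} (hv : v ≠ 0) (x : ℝ) :
    cdf (gaussianReal μ v) x = ∫ t in Iic x, gaussianPDFReal μ v t := by
  rw [cdf_eq_real, measureReal_def, gaussianReal_apply_eq_integral μ hv, ENNReal.toReal_ofReal]
  exact setIntegral_nonneg measurableSet_Iic fun t _ ↦ gaussianPDFReal_nonneg μ v t

lemma hasDerivAt_cdf_gaussianReal (μ : ℝ) {v : ℝ≥0} (hv : v ≠ 0) (x : ℝ) :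
    HasDerivAt (cdf (gaussianReal μ v)) (gaussianPDFReal μ v x) x := by
  have hint := (integrable_gaussianPDFReal μ v).integrableOn (s := Iic 0)
  have hcont : Continuous (gaussianPDFReal μ v) := by
    rw [gaussianPDFReal_def]
    fun_prop
  have hcdf : cdf (gaussianReal μ v) =
      fun y ↦ cdf (gaussianReal μ v) 0 + ∫ t in (0 : ℝ)..y, gaussianPDFReal μ v t := by
    ext y
    rw [cdf_gaussianReal_eq_integral μ hv, cdf_gaussianReal_eq_integral μ hv,
      ← intervalIntegral.integral_Iic_sub_Iic hint
        ((integrable_gaussianPDFReal μ v).integrableOn), add_sub_cancel]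
  rw [hcdf]
  exact (intervalIntegral.integral_hasDerivAt_right
    (integrable_gaussianPDFReal μ v).intervalIntegrable
    hcont.stronglyMeasurable.stronglyMeasurableAtFilter hcont.continuousAt).const_add _

lemma gaussianReal_map_affine (μ : ℝ) (v : ℝ≥0) :
    (gaussianReal 0 1).map (fun x ↦ √v * x + μ) = gaussianReal μ v := by
  rw [show (fun x ↦ √v * x + μ) = (· + μ) ∘ (√v * ·) from rfl,
    ← Measure.map_map (measurable_add_const μ) (measurable_const_mul _),
    gaussianReal_map_const_mul, gaussianReal_map_add_const, mul_zero, zero_add]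
  congr
  ext
  simp

lemma toReal_gaussianReal_Iic (μ : ℝ) {v : ℝ≥0} (hv : v ≠ 0) (c : ℝ) :
    (gaussianReal μ v (Iic c)).toReal = Φ ((c - μ) / √v) := by
  have hsqrt : 0 < √(v : ℝ) := by positivity
  have hpre : (fun x ↦ √v * x + μ) ⁻¹' Iic c = Iic ((c - μ) / √v) := by
    ext x
    simp only [mem_preimage, mem_Iic, le_div_iff₀ hsqrt]
    constructor <;> intro <;> linarith
  rw [← gaussianReal_map_affine μ v, Measure.map_apply (by fun_prop) measurableSet_Iic, hpre,
    cdf_eq_real, measureReal_def]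

lemma toReal_gaussianReal_Ici (μ : ℝ) {v : ℝ≥0} (hv : v ≠ 0) (c : ℝ) :
    (gaussianReal μ v (Ici c)).toReal = Φ ((μ - c) / √v) := by
  have hpre : (fun x ↦ -x) ⁻¹' Iic (-c) = Ici c := by
    ext x
    simp
  rw [show μ - c = -c - -μ by ring, ← toReal_gaussianReal_Iic (-μ) hv,
    ← gaussianReal_map_neg, Measure.map_apply measurable_neg measurableSet_Iic, hpre]

lemma exp_mul_gaussianPDFReal_zero_one (a b : ℝ) :
    Real.exp ((b ^ 2 - a ^ 2) / 2) * φ b = φ a := by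
  simp only [gaussianPDFReal_def, NNReal.coe_one, mul_one, sub_zero]
  rw [mul_left_comm, ← Real.exp_add]
  ring_nf

noncomputable def gaussianProfile (ε η : ℝ) : ℝ :=
  Φ ((η - ε) / √(2 * η)) - Real.exp ε * Φ ((-ε - η) / √(2 * η))

lemma hasDerivAt_sqrt_two_mul {η : ℝ} (hη : 0 < η) :
    HasDerivAt (fun t ↦ √(2 * t)) (√(2 * η))⁻¹ η := by
  refine (((hasDerivAt_id' η).const_mul 2).sqrt (by positivity)).congr_deriv ?_
  field_simp

lemma hasDerivAt_gaussianProfile (ε : ℝ) {η : ℝ} (hη : 0 < η) :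
    HasDerivAt (gaussianProfile ε) (φ ((η - ε) / √(2 * η)) / √(2 * η)) η := by
  have hs := hasDerivAt_sqrt_two_mul hη
  obtain ⟨a', ha⟩ : ∃ a', HasDerivAt (fun t ↦ (t - ε) / √(2 * t)) a' η :=
    ⟨_, ((hasDerivAt_id η).sub_const ε).div hs (by positivity)⟩
  have hb : HasDerivAt (fun t ↦ (-ε - t) / √(2 * t)) (a' - (√(2 * η))⁻¹) η := by
    refine (ha.sub hs).congr_of_eventuallyEq ?_
    filter_upwards [Ioi_mem_nhds hη] with t (ht : 0 < t)
    have : 0 < √(2 * t) := by positivity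
    simp only [Pi.sub_apply]
    field_simp
    rw [Real.sq_sqrt (by positivity)]
    ring
  have hpdf : Real.exp ε * φ ((-ε - η) / √(2 * η)) = φ ((η - ε) / √(2 * η)) := by
    convert exp_mul_gaussianPDFReal_zero_one _ _ using 3
    rw [div_pow, div_pow, Real.sq_sqrt (by positivity)]
    field_simp
    ring
  have hΦ := hasDerivAt_cdf_gaussianReal 0 one_ne_zero
  refine (((hΦ _).comp η ha).sub (((hΦ _).comp η hb).const_mul (Real.exp ε))).congr_deriv ?_
  rw [← mul_assoc, hpdf]
  ring

lemma eqOn_gaussianProfile (ε : ℝ) :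
    EqOn (gaussianProfile ε) (fun η : ℝ =>
        ((gaussianReal η (2 * η).toNNReal) (Ici ε)).toReal -
          Real.exp ε * ((gaussianReal η (2 * η).toNNReal) (Iic (-ε))).toReal)
      (Ioi 0) := by
  intro η (hη : 0 < η)
  have hv : (2 * η).toNNReal ≠ 0 := by simpa using hη
  simp only [gaussianProfile, toReal_gaussianReal_Ici _ hv, toReal_gaussianReal_Iic _ hv,
    Real.coe_toNNReal _ (by positivity : 0 ≤ 2 * η)]

theorem monotone_privacy_profile_general (ε : ℝ) :
    MonotoneOn (fun η : ℝ =>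
        ((gaussianReal η (2 * η).toNNReal) (Set.Ici ε)).toReal -
          Real.exp ε * ((gaussianReal η (2 * η).toNNReal) (Set.Iic (-ε))).toReal)
      (Set.Ioi (0 : ℝ)) := by
  refine MonotoneOn.congr ?_ (eqOn_gaussianProfile ε)
  refine monotoneOn_of_hasDerivWithinAt_nonneg (convex_Ioi 0)
    (f' := fun η ↦ φ ((η - ε) / √(2 * η)) / √(2 * η))
    (fun η hη ↦ (hasDerivAt_gaussianProfile ε hη).continuousAt.continuousWithinAt) ?_ ?_
  all_goals rw [interior_Ioi]
  · exact fun η hη ↦ (hasDerivAt_gaussianProfile ε hη).hasDerivWithinAt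
  · exact fun η _ ↦ div_nonneg (gaussianPDFReal_nonneg _ _ _) (Real.sqrt_nonneg _)

theorem monotone_privacy_profile (ε : ℝ) (hε : 0 ≤ ε) :
    MonotoneOn (fun η : ℝ =>
        ((gaussianReal η (2 * η).toNNReal) (Set.Ici ε)).toReal -
          Real.exp ε * ((gaussianReal η (2 * η).toNNReal) (Set.Iic (-ε))).toReal)
      (Set.Ioi (0 : ℝ)) :=
  monotone_privacy_profile_general ε
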